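/- The sequent Add2(x,y,z) ⊢ Add1(x,y,z) is provable in the cyclic proof system CLKID^ω. -/

import Mathlib

namespace CLKID

/-- Terms of the language: variables, the constant `0`, and the unary function `s`. -/
inductive Tm : Type where
  | var : ℕ → Tm
  | zero : Tm
  | s : Tm → Tm
deriving DecidableEq

/-- `sIter n t` is the term `s^n t`. -/
def sIter : ℕ → Tm → Tm
  | 0, t => t
  | n + 1, t => Tm.s (sIter n t)

/-- Substitution on terms. -/
def Tm.subst (θ : ℕ → Tm) : Tm → Tm
  | .var x => θ x
  | .zero => .zero
  | .s t => .s (t.subst θ)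

/-- Free variables of a term. -/
def Tm.fv : Tm → Set ℕ
  | .var x => {x}
  | .zero => ∅
  | .s t => t.fv

/-- Subterms of a term. -/
def Tm.sub : Tm → Set Tm
  | .var x => {Tm.var x}
  | .zero => {Tm.zero}
  | .s t => insert (Tm.s t) t.sub

/-- The variable of a term (`none` if the term is of the form `s^n 0`). -/
def Tm.varOf : Tm → Option ℕ
  | .var x => some x
  | .zero => none
  | .s t => t.varOf

/-- Formulas: equations, the two inductive-predicate atoms `Add1`/`Add2`,
    and the usual first-order connectives and quantifiers. -/
inductive Fm : Type where
  | eq : Tm → Tm → Fm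
  | add1 : Tm → Tm → Tm → Fm
  | add2 : Tm → Tm → Tm → Fm
  | not : Fm → Fm
  | and : Fm → Fm → Fm
  | or : Fm → Fm → Fm
  | imp : Fm → Fm → Fm
  | all : ℕ → Fm → Fm
  | ex : ℕ → Fm → Fm
deriving DecidableEq

/-- Substitution on formulas. -/
def Fm.subst (θ : ℕ → Tm) : Fm → Fm
  | .eq t u => .eq (t.subst θ) (u.subst θ)
  | .add1 a b c => .add1 (a.subst θ) (b.subst θ) (c.subst θ)
  | .add2 a b c => .add2 (a.subst θ) (b.subst θ) (c.subst θ)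
  | .not φ => .not (φ.subst θ)
  | .and φ ψ => .and (φ.subst θ) (ψ.subst θ)
  | .or φ ψ => .or (φ.subst θ) (ψ.subst θ)
  | .imp φ ψ => .imp (φ.subst θ) (ψ.subst θ)
  | .all x φ => .all x (φ.subst (Function.update θ x (Tm.var x)))
  | .ex x φ => .ex x (φ.subst (Function.update θ x (Tm.var x)))

/-- Free variables of a formula. -/
def Fm.fv : Fm → Set ℕ
  | .eq t u => t.fv ∪ u.fv
  | .add1 a b c => a.fv ∪ b.fv ∪ c.fv
  | .add2 a b c => a.fv ∪ b.fv ∪ c.fv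
  | .not φ => φ.fv
  | .and φ ψ => φ.fv ∪ ψ.fv
  | .or φ ψ => φ.fv ∪ ψ.fv
  | .imp φ ψ => φ.fv ∪ ψ.fv
  | .all x φ => φ.fv \ {x}
  | .ex x φ => φ.fv \ {x}

/-- Terms occurring in a formula. -/
def Fm.tms : Fm → Set Tm
  | .eq t u => t.sub ∪ u.sub
  | .add1 a b c => a.sub ∪ b.sub ∪ c.sub
  | .add2 a b c => a.sub ∪ b.sub ∪ c.sub
  | .not φ => φ.tms
  | .and φ ψ => φ.tms ∪ ψ.tms
  | .or φ ψ => φ.tms ∪ ψ.tms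
  | .imp φ ψ => φ.tms ∪ ψ.tms
  | .all _ φ => φ.tms
  | .ex _ φ => φ.tms

/-- The substitution `[x := t]`. -/
def sub1 (x : ℕ) (t : Tm) : ℕ → Tm := fun y => if y = x then t else Tm.var y

/-- The simultaneous substitution `[v1 := t, v2 := u]`. -/
def sub2 (v1 v2 : ℕ) (t u : Tm) : ℕ → Tm :=
  fun z => if z = v1 then t else if z = v2 then u else Tm.var z

/-- `≡_Γ`: the smallest congruence relation on terms containing all pairs `(t, u)`
    with the equation `t = u` in `Γ`. -/
inductive EqvTm (Γ : Set Fm) : Tm → Tm → Prop where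
  | base {t u : Tm} : Fm.eq t u ∈ Γ → EqvTm Γ t u
  | refl (t : Tm) : EqvTm Γ t t
  | symm {t u : Tm} : EqvTm Γ t u → EqvTm Γ u t
  | trans {t u v : Tm} : EqvTm Γ t u → EqvTm Γ u v → EqvTm Γ t v
  | sCongr {t u : Tm} : EqvTm Γ t u → EqvTm Γ (Tm.s t) (Tm.s u)

/-- `t ~_Γ u` : `s^n t ≡_Γ s^m u` for some naturals `n`, `m`. -/
def DepTm (Γ : Set Fm) (t u : Tm) : Prop := ∃ n m : ℕ, EqvTm Γ (sIter n t) (sIter m u)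

/-- A sequent: a pair of finite sets of formulas. -/
structure Seq where
  ant : Finset Fm
  suc : Finset Fm

/-- The antecedent of a sequent, as a set of formulas. -/
def antSet (S : Seq) : Set Fm := ↑S.ant

/-- `[Γ]` from Lemma on chains: `{ s^n t1 = s^n t2 | t1 = t2 ∈ Γ or t2 = t1 ∈ Γ }`. -/
def brkt (Γ : Set Fm) : Set Fm :=
  {φ | ∃ (n : ℕ) (t1 t2 : Tm), φ = Fm.eq (sIter n t1) (sIter n t2) ∧
        (Fm.eq t1 t2 ∈ Γ ∨ Fm.eq t2 t1 ∈ Γ)}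

/-- `B1(Γ ⊢ Δ)` : second arguments of `Add1` atoms in the consequent. -/
def B1 (S : Seq) : Set Tm := {b | ∃ a c, Fm.add1 a b c ∈ S.suc}

/-- `C(Γ ⊢ Δ)` : third arguments of `Add2` atoms in the antecedent
    or `Add1` atoms in the consequent. -/
def Cset (S : Seq) : Set Tm :=
  {c | (∃ a b, Fm.add2 a b c ∈ S.ant) ∨ (∃ a b, Fm.add1 a b c ∈ S.suc)}

/-- Index sequent. -/
def IndexSequent (S : Seq) : Prop :=
  (∀ t ∈ B1 S, ∀ u ∈ Cset S, ¬ DepTm (antSet S) t u) ∧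
  (∀ b ∈ B1 S, ∀ b' ∈ B1 S, ∀ n m : ℕ, EqvTm (antSet S) (sIter n b) (sIter m b') → n = m)

/-! ## The cyclic proof systems `CLKID^ω` and `CLKID^ω_a` -/

/-- Rule labels; each label carries the instance data needed to describe the
    rule application (principal formulas, substitutions, case variables, ...).
    `bud` labels bud leaves of cyclic derivation trees. -/
inductive Rule : Type where
  | ax
  | weak
  | cut (φ : Fm)
  | subst (θ : ℕ → Tm)
  | negL (φ : Fm)
  | negR (φ : Fm)
  | andL (φ ψ : Fm)
  | andR (φ ψ : Fm)
  | orL (φ ψ : Fm)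
  | orR (φ ψ : Fm)
  | impL (φ ψ : Fm)
  | impR (φ ψ : Fm)
  | allL (x : ℕ) (t : Tm) (φ : Fm)
  | allR (x : ℕ) (φ : Fm)
  | exL (x : ℕ) (φ : Fm)
  | exR (x : ℕ) (t : Tm) (φ : Fm)
  | eqR (t : Tm)
  | eqL (v1 v2 : ℕ) (t u : Tm)
  | eqLa (v1 v2 : ℕ) (t u : Tm)
  | add1R1
  | add1R2 (a b c : Tm)
  | add2R1
  | add2R2 (a b c : Tm)
  | caseAdd1 (a b c : Tm) (x y z : ℕ)
  | caseAdd2 (a b c : Tm) (x y z : ℕ)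
  | bud

/-- `Inf r S L` : the sequent `S` follows from the list of premises `L`
    by the rule (instance) `r`. -/
inductive Inf : Rule → Seq → List Seq → Prop where
  | ax {Γ Δ : Finset Fm} :
      (Γ ∩ Δ).Nonempty → Inf .ax ⟨Γ, Δ⟩ []
  | weak {Γ Δ Γ' Δ' : Finset Fm} :
      Γ' ⊆ Γ → Δ' ⊆ Δ → Inf .weak ⟨Γ, Δ⟩ [⟨Γ', Δ'⟩]
  | cut {Γ Δ : Finset Fm} {φ : Fm} :
      Inf (.cut φ) ⟨Γ, Δ⟩ [⟨Γ, insert φ Δ⟩, ⟨insert φ Γ, Δ⟩]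
  | subst {Γ Δ : Finset Fm} {θ : ℕ → Tm} :
      Inf (.subst θ) ⟨Γ.image (Fm.subst θ), Δ.image (Fm.subst θ)⟩ [⟨Γ, Δ⟩]
  | negL {Γ Δ : Finset Fm} {φ : Fm} :
      Inf (.negL φ) ⟨insert (.not φ) Γ, Δ⟩ [⟨Γ, insert φ Δ⟩]
  | negR {Γ Δ : Finset Fm} {φ : Fm} :
      Inf (.negR φ) ⟨Γ, insert (.not φ) Δ⟩ [⟨insert φ Γ, Δ⟩]
  | andL {Γ Δ : Finset Fm} {φ ψ : Fm} :
      Inf (.andL φ ψ) ⟨insert (.and φ ψ) Γ, Δ⟩ [⟨insert φ (insert ψ Γ), Δ⟩]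
  | andR {Γ Δ : Finset Fm} {φ ψ : Fm} :
      Inf (.andR φ ψ) ⟨Γ, insert (.and φ ψ) Δ⟩ [⟨Γ, insert φ Δ⟩, ⟨Γ, insert ψ Δ⟩]
  | orL {Γ Δ : Finset Fm} {φ ψ : Fm} :
      Inf (.orL φ ψ) ⟨insert (.or φ ψ) Γ, Δ⟩ [⟨insert φ Γ, Δ⟩, ⟨insert ψ Γ, Δ⟩]
  | orR {Γ Δ : Finset Fm} {φ ψ : Fm} :
      Inf (.orR φ ψ) ⟨Γ, insert (.or φ ψ) Δ⟩ [⟨Γ, insert φ (insert ψ Δ)⟩]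
  | impL {Γ Δ : Finset Fm} {φ ψ : Fm} :
      Inf (.impL φ ψ) ⟨insert (.imp φ ψ) Γ, Δ⟩ [⟨Γ, insert φ Δ⟩, ⟨insert ψ Γ, Δ⟩]
  | impR {Γ Δ : Finset Fm} {φ ψ : Fm} :
      Inf (.impR φ ψ) ⟨Γ, insert (.imp φ ψ) Δ⟩ [⟨insert φ Γ, insert ψ Δ⟩]
  | allL {Γ Δ : Finset Fm} {x : ℕ} {t : Tm} {φ : Fm} :
      Inf (.allL x t φ) ⟨insert (.all x φ) Γ, Δ⟩ [⟨insert (φ.subst (sub1 x t)) Γ, Δ⟩]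
  | allR {Γ Δ : Finset Fm} {x : ℕ} {φ : Fm} :
      (∀ ψ ∈ Γ ∪ Δ, x ∉ Fm.fv ψ) →
      Inf (.allR x φ) ⟨Γ, insert (.all x φ) Δ⟩ [⟨Γ, insert φ Δ⟩]
  | exL {Γ Δ : Finset Fm} {x : ℕ} {φ : Fm} :
      (∀ ψ ∈ Γ ∪ Δ, x ∉ Fm.fv ψ) →
      Inf (.exL x φ) ⟨insert (.ex x φ) Γ, Δ⟩ [⟨insert φ Γ, Δ⟩]
  | exR {Γ Δ : Finset Fm} {x : ℕ} {t : Tm} {φ : Fm} :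
      Inf (.exR x t φ) ⟨Γ, insert (.ex x φ) Δ⟩ [⟨Γ, insert (φ.subst (sub1 x t)) Δ⟩]
  | eqR {Γ Δ : Finset Fm} {t : Tm} :
      Inf (.eqR t) ⟨Γ, insert (.eq t t) Δ⟩ []
  | eqL {Γ Δ : Finset Fm} {v1 v2 : ℕ} {t u : Tm} :
      Inf (.eqL v1 v2 t u)
        ⟨insert (.eq t u) (Γ.image (Fm.subst (sub2 v1 v2 t u))),
          Δ.image (Fm.subst (sub2 v1 v2 t u))⟩
        [⟨Γ.image (Fm.subst (sub2 v1 v2 u t)), Δ.image (Fm.subst (sub2 v1 v2 u t))⟩]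
  | eqLa {Γ Δ : Finset Fm} {v1 v2 : ℕ} {t u : Tm} :
      Inf (.eqLa v1 v2 t u)
        ⟨insert (.eq t u) (Γ.image (Fm.subst (sub2 v1 v2 t u))),
          Δ.image (Fm.subst (sub2 v1 v2 t u))⟩
        [⟨insert (.eq t u) (Γ.image (Fm.subst (sub2 v1 v2 u t))),
          Δ.image (Fm.subst (sub2 v1 v2 u t))⟩]
  | add1R1 {Γ Δ : Finset Fm} {b : Tm} :
      Inf .add1R1 ⟨Γ, insert (.add1 .zero b b) Δ⟩ []
  | add1R2 {Γ Δ : Finset Fm} {a b c : Tm} :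
      Inf (.add1R2 a b c) ⟨Γ, insert (.add1 (.s a) b (.s c)) Δ⟩ [⟨Γ, insert (.add1 a b c) Δ⟩]
  | add2R1 {Γ Δ : Finset Fm} {b : Tm} :
      Inf .add2R1 ⟨Γ, insert (.add2 .zero b b) Δ⟩ []
  | add2R2 {Γ Δ : Finset Fm} {a b c : Tm} :
      Inf (.add2R2 a b c) ⟨Γ, insert (.add2 (.s a) b c) Δ⟩ [⟨Γ, insert (.add2 a (.s b) c) Δ⟩]
  | caseAdd1 {Γ Δ : Finset Fm} {a b c : Tm} {x y z : ℕ} :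
      x ≠ y → x ≠ z → y ≠ z →
      (∀ ψ ∈ insert (Fm.add1 a b c) (Γ ∪ Δ), x ∉ Fm.fv ψ ∧ y ∉ Fm.fv ψ ∧ z ∉ Fm.fv ψ) →
      Inf (.caseAdd1 a b c x y z) ⟨insert (.add1 a b c) Γ, Δ⟩
        [⟨insert (.eq a .zero) (insert (.eq b (.var y)) (insert (.eq c (.var y)) Γ)), Δ⟩,
         ⟨insert (.eq a (.s (.var x))) (insert (.eq b (.var y)) (insert (.eq c (.s (.var z)))
            (insert (.add1 (.var x) (.var y) (.var z)) Γ))), Δ⟩]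
  | caseAdd2 {Γ Δ : Finset Fm} {a b c : Tm} {x y z : ℕ} :
      x ≠ y → x ≠ z → y ≠ z →
      (∀ ψ ∈ insert (Fm.add2 a b c) (Γ ∪ Δ), x ∉ Fm.fv ψ ∧ y ∉ Fm.fv ψ ∧ z ∉ Fm.fv ψ) →
      Inf (.caseAdd2 a b c x y z) ⟨insert (.add2 a b c) Γ, Δ⟩
        [⟨insert (.eq a .zero) (insert (.eq b (.var y)) (insert (.eq c (.var y)) Γ)), Δ⟩,
         ⟨insert (.eq a (.s (.var x))) (insert (.eq b (.var y)) (insert (.eq c (.var z))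
            (insert (.add2 (.var x) (.s (.var y)) (.var z)) Γ))), Δ⟩]

/-- A labeling of tree nodes (finite sequences of naturals) by sequents and rules;
    `none` means the node is not in the tree. -/
abbrev Lbl : Type := List ℕ → Option (Seq × Rule)

/-- The children of `σ` are labeled exactly by the premise list `prems`. -/
def childrenOK (f : Lbl) (σ : List ℕ) (prems : List Seq) : Prop :=
  (∀ i : Fin prems.length, ∃ r', f (σ ++ [(i : ℕ)]) = some (prems.get i, r')) ∧
  (∀ i : ℕ, prems.length ≤ i → f (σ ++ [i]) = none)

/-- Derivation trees (possibly infinite): prefix-closed domain, each non-bud node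
    is the conclusion of a rule whose premises label its children, buds are leaves. -/
structure DTree where
  label : Lbl
  root_def : label [] ≠ none
  prefix_closed : ∀ σ τ : List ℕ, label (σ ++ τ) ≠ none → label σ ≠ none
  wf : ∀ σ S r, label σ = some (S, r) →
    (r = Rule.bud ∧ ∀ i : ℕ, label (σ ++ [i]) = none) ∨
    (r ≠ Rule.bud ∧ ∃ prems, Inf r S prems ∧ childrenOK label σ prems)

/-- `σ` is a bud of the labeling `f`. -/
def budAt (f : Lbl) (σ : List ℕ) : Prop := ∃ S, f σ = some (S, Rule.bud)

/-- `σ` is an inner node of `f` labeled with the sequent `S`. -/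
def innerWith (f : Lbl) (σ : List ℕ) (S : Seq) : Prop :=
  ∃ r, f σ = some (S, r) ∧ r ≠ Rule.bud

/-- A pre-proof: a finite derivation tree together with a function assigning to
    each bud a companion, i.e. an inner node labeled with the same sequent. -/
structure PreProof where
  D : DTree
  fin : {σ : List ℕ | D.label σ ≠ none}.Finite
  C : List ℕ → List ℕ
  comp : ∀ σ S, D.label σ = some (S, Rule.bud) → innerWith D.label (C σ) S

/-- Cycle-normality: every companion is an ancestor of its bud. -/
def PreProof.CycleNormal (P : PreProof) : Prop :=
  ∀ σ S, P.D.label σ = some (S, Rule.bud) → P.C σ <+: σ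

/-- `T` is the tree-unfolding of the pre-proof `P`: it agrees with `P.D` on
    non-bud nodes, below a bud it continues as below the bud's companion, and it
    is empty on nodes not in `P.D` having no bud prefix. -/
def IsUnfolding (P : PreProof) (T : Lbl) : Prop :=
  (∀ σ, P.D.label σ ≠ none → ¬ budAt P.D.label σ → T σ = P.D.label σ) ∧
  (∀ σ₁ σ₂ : List ℕ, budAt P.D.label σ₁ → T (σ₁ ++ σ₂) = T (P.C σ₁ ++ σ₂)) ∧
  (∀ σ, P.D.label σ = none → (∀ σ₁, σ₁ <+: σ → ¬ budAt P.D.label σ₁) → T σ = none)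

/-- An infinite path in the labeling `f`. -/
def IsInfPath (f : Lbl) (p : ℕ → List ℕ) : Prop :=
  (∀ i, f (p i) ≠ none) ∧ (∀ i, ∃ n : ℕ, p (i + 1) = p i ++ [n])

/-- Atomic formulas with an inductive predicate. -/
def isIndAtom (φ : Fm) : Prop :=
  (∃ a b c, φ = Fm.add1 a b c) ∨ (∃ a b c, φ = Fm.add2 a b c)

/-- A progressing trace step: the traced formula is the principal formula of a
    case rule and its successor (in the corresponding case distinction, child `j`)
    is a case-descendant. -/
def progStep : Rule → ℕ → Fm → Fm → Prop := fun r j τ τ' =>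
  match r with
  | .caseAdd1 a b c x y z =>
      τ = Fm.add1 a b c ∧ j = 1 ∧ τ' = Fm.add1 (.var x) (.var y) (.var z)
  | .caseAdd2 a b c x y z =>
      τ = Fm.add2 a b c ∧ j = 1 ∧ τ' = Fm.add2 (.var x) (.s (.var y)) (.var z)
  | _ => False

/-- The trace connection relation between the traced formula at a conclusion of a
    rule `r` and the traced formula at its `j`-th premise. -/
def connStep : Rule → ℕ → Fm → Fm → Prop := fun r j τ τ' =>
  match r with
  | .subst θ => τ = Fm.subst θ τ'
  | .eqL v1 v2 t u =>
      ∃ F : Fm, τ = Fm.subst (sub2 v1 v2 t u) F ∧ τ' = Fm.subst (sub2 v1 v2 u t) F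
  | .eqLa v1 v2 t u =>
      ∃ F : Fm, τ = Fm.subst (sub2 v1 v2 t u) F ∧ τ' = Fm.subst (sub2 v1 v2 u t) F
  | .caseAdd1 a b c x y z => τ' = τ ∨ progStep (.caseAdd1 a b c x y z) j τ τ'
  | .caseAdd2 a b c x y z => τ' = τ ∨ progStep (.caseAdd2 a b c x y z) j τ τ'
  | _ => τ' = τ

/-- `τ` is a trace following the tail from `k` of the path `p` in `f`. -/
def IsTraceFrom (f : Lbl) (p : ℕ → List ℕ) (k : ℕ) (τ : ℕ → Fm) : Prop :=
  ∀ i, k ≤ i →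
    ∃ (S : Seq) (r : Rule) (j : ℕ), f (p i) = some (S, r) ∧ τ i ∈ S.ant ∧ isIndAtom (τ i) ∧
      p (i + 1) = p i ++ [j] ∧ connStep r j (τ i) (τ (i + 1))

/-- The trace `τ` progresses at position `i` of the path `p`. -/
def progAt (f : Lbl) (p : ℕ → List ℕ) (τ : ℕ → Fm) (i : ℕ) : Prop :=
  ∃ (S : Seq) (r : Rule) (j : ℕ), f (p i) = some (S, r) ∧ p (i + 1) = p i ++ [j] ∧
    progStep r j (τ i) (τ (i + 1))

/-- The global trace condition for a (possibly infinite) labeling `f`. -/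
def GTC (f : Lbl) : Prop :=
  ∀ p : ℕ → List ℕ, IsInfPath f p →
    ∃ (k : ℕ) (τ : ℕ → Fm), IsTraceFrom f p k τ ∧
      ∀ n : ℕ, ∃ i, n ≤ i ∧ k ≤ i ∧ progAt f p τ i

/-- A pre-proof is a proof when its tree-unfolding satisfies the
    global trace condition. -/
def PreProof.IsProof (P : PreProof) : Prop := ∃ T : Lbl, IsUnfolding P T ∧ GTC T

/-- Some rule satisfying `Q` occurs in the labeling `f`. -/
def usesRule (f : Lbl) (Q : Rule → Prop) : Prop := ∃ σ S r, f σ = some (S, r) ∧ Q r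

/-- No occurrence of (Cut). -/
def PreProof.CutFree (P : PreProof) : Prop :=
  ¬ usesRule P.D.label (fun r => ∃ φ, r = Rule.cut φ)

/-- No occurrence of (= L_a): the pre-proof is a `CLKID^ω` pre-proof. -/
def PreProof.NoEqLa (P : PreProof) : Prop :=
  ¬ usesRule P.D.label (fun r => ∃ v1 v2 t u, r = Rule.eqLa v1 v2 t u)

/-- No occurrence of (= L): the pre-proof is a `CLKID^ω_a` pre-proof. -/
def PreProof.NoEqL (P : PreProof) : Prop :=
  ¬ usesRule P.D.label (fun r => ∃ v1 v2 t u, r = Rule.eqL v1 v2 t u)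

/-- The conclusion of the pre-proof is the sequent `S`. -/
def PreProof.Concl (P : PreProof) (S : Seq) : Prop := ∃ r, P.D.label [] = some (S, r)

/-- Provability in `CLKID^ω`. -/
def ProvableW (S : Seq) : Prop :=
  ∃ P : PreProof, P.IsProof ∧ P.NoEqLa ∧ P.Concl S

/-- Provability in `CLKID^ω_a`. -/
def ProvableWa (S : Seq) : Prop :=
  ∃ P : PreProof, P.IsProof ∧ P.NoEqL ∧ P.Concl S

/-- Cut-free provability in `CLKID^ω`. -/
def CutFreeProvableW (S : Seq) : Prop :=
  ∃ P : PreProof, P.IsProof ∧ P.CutFree ∧ P.NoEqLa ∧ P.Concl S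

/-- The sequent `Add2(x, y, z) ⊢ Add1(x, y, z)`. -/
def goalSeq : Seq :=
  ⟨{Fm.add2 (Tm.var 0) (Tm.var 1) (Tm.var 2)}, {Fm.add1 (Tm.var 0) (Tm.var 1) (Tm.var 2)}⟩

/-- A cut-free cycle-normal `CLKID^ω_a` proof of `Add2(x,y,z) ⊢ Add1(x,y,z)`. -/
def IsCNProofOfGoal (P : PreProof) : Prop :=
  P.IsProof ∧ P.CutFree ∧ P.NoEqL ∧ P.CycleNormal ∧ P.Concl goalSeq

/-- The index of an `Add2` atom with second argument `b` in the sequent `S` is `⊥`. -/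
def IndexBot (S : Seq) (b : Tm) : Prop :=
  ∀ a' b' c', Fm.add1 a' b' c' ∈ S.suc → ¬ DepTm (antSet S) b b'

/-- `σ` is a switching point of `f`: the conclusion of a `(Case Add2)` rule whose
    principal formula has index `⊥`. -/
def SwitchingPoint (f : Lbl) (σ : List ℕ) : Prop :=
  ∃ S a b c x y z, f σ = some (S, Rule.caseAdd2 a b c x y z) ∧ IndexBot S b

/-- `σ` is the conclusion of a `(Case Add2)` rule in `f`. -/
def CaseAdd2At (f : Lbl) (σ : List ℕ) : Prop :=
  ∃ S a b c x y z, f σ = some (S, Rule.caseAdd2 a b c x y z)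

/-- The node `σ` of `f` is labeled with an index sequent. -/
def IndexSequentAt (f : Lbl) (σ : List ℕ) : Prop :=
  ∃ S r, f σ = some (S, r) ∧ IndexSequent S

/-- A finite index path `p 0, …, p N` in `f`:  its first sequent is an index
    sequent, and a step to the left premise (child `0`) of a `(Case Add2)` rule
    only happens at switching points. -/
def IsIndexPathUpTo (f : Lbl) (p : ℕ → List ℕ) (N : ℕ) : Prop :=
  (∀ i, i ≤ N → f (p i) ≠ none) ∧
  (∀ i, i < N → ∃ n : ℕ, p (i + 1) = p i ++ [n]) ∧
  IndexSequentAt f (p 0) ∧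
  (∀ i, i < N → CaseAdd2At f (p i) → p (i + 1) = p i ++ [0] → SwitchingPoint f (p i))

/-- An infinite index path in `f`. -/
def IsInfIndexPath (f : Lbl) (p : ℕ → List ℕ) : Prop :=
  IsInfPath f p ∧
  IndexSequentAt f (p 0) ∧
  (∀ i, CaseAdd2At f (p i) → p (i + 1) = p i ++ [0] → SwitchingPoint f (p i))

/-- The child index chosen by the rightmost path: the right assumption of
    `(Case Add2)`, the unique premise otherwise. -/
def rightIdx : Rule → ℕ := fun r =>
  match r with
  | .caseAdd2 _ _ _ _ _ _ => 1
  | _ => 0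

/-- One step of the rightmost path in `f`. -/
def RightStep (f : Lbl) (σ σ' : List ℕ) : Prop :=
  ∃ S r, f σ = some (S, r) ∧ σ' = σ ++ [rightIdx r] ∧ f σ' ≠ none

/-- `A(Γ ⊢ Δ)` of Lemma `abc_relations`. -/
def Aset (S : Seq) : Set Tm :=
  {a | (∃ b c, Fm.add2 a b c ∈ S.ant) ∨ (∃ b c, Fm.add1 a b c ∈ S.suc) ∨ a = Tm.zero}

/-- `BC(Γ ⊢ Δ)` of Lemma `abc_relations`. -/
def BCset (S : Seq) : Set Tm :=
  {t | (∃ a c, Fm.add2 a t c ∈ S.ant) ∨ (∃ a b, Fm.add2 a b t ∈ S.ant) ∨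
       (∃ a c, Fm.add1 a t c ∈ S.suc) ∨ (∃ a b, Fm.add1 a b t ∈ S.suc)}

/-- The rules that can occur in a cut-free cycle-normal `CLKID^ω_a` proof of
    `Add2(x,y,z) ⊢ Add1(x,y,z)` (plus bud labels). -/
def allowedRule (r : Rule) : Prop :=
  r = Rule.bud ∨ r = Rule.weak ∨ (∃ θ, r = Rule.subst θ) ∨
  (∃ v1 v2 t u, r = Rule.eqLa v1 v2 t u) ∨
  (∃ a b c x y z, r = Rule.caseAdd2 a b c x y z) ∨
  r = Rule.add1R1 ∨ (∃ a b c, r = Rule.add1R2 a b c)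

/-!
The derivation unfolds `Add2(x, y, z)` by (Case Add2). The base case is `Add1(0, y, y)`. In the
step case `x = s x'`, the premise `Add2(x', s y, z)` gives `Add1(x', s y, z)` by a substitution
instance of the root sequent, i.e. a cycle back to the root, and the cut lemma
`Add1(x', s y, z) ⊢ Add1(s x', y, z)` is proved by a cycle of its own that unfolds
`Add1(x', s y, z)` by (Case Add1).

An infinite path either stays on the loop through the root, where it follows the `Add2` atom,
which progresses at each pass through the root, or it eventually enters the loop of the lemma,
which it never leaves and where the `Add1` atom progresses at each pass. This is certified by a
ranking of the graph of the pre-proof: a level that never increases separates the two loops, and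
inside a loop a rank drops along every edge on which the trace does not progress.
-/

lemma Inf.ne_bud {r : Rule} {S : Seq} {L : List Seq} (h : Inf r S L) : r ≠ .bud := by
  cases h <;> nofun

lemma Inf.of_eq {r : Rule} {S S' : Seq} {L L' : List Seq} (h : Inf r S L) (hS : S = S')
    (hL : L = L') : Inf r S' L' :=
  hS ▸ hL ▸ h

instance : DecidableEq Seq := fun a b =>
  decidable_of_iff (a.ant = b.ant ∧ a.suc = b.suc) (by cases a; cases b; simp)

/-- Finite derivation trees, addressed from the root as in `Lbl`. Every rule of `CLKID^ω` has at
most two premises; a bud is a `leaf` labelled `Rule.bud`. -/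
inductive Deriv : Type where
  | leaf (S : Seq) (r : Rule)
  | unary (S : Seq) (r : Rule) (d : Deriv)
  | binary (S : Seq) (r : Rule) (d₁ d₂ : Deriv)

namespace Deriv

def concl : Deriv → Seq
  | leaf S _ | unary S _ _ | binary S _ _ _ => S

def rule : Deriv → Rule
  | leaf _ r | unary _ r _ | binary _ r _ _ => r

def label : Deriv → Lbl
  | leaf S r, [] | unary S r _, [] | binary S r _ _, [] => some (S, r)
  | unary _ _ d, 0 :: σ | binary _ _ d _, 0 :: σ | binary _ _ _ d, 1 :: σ => d.label σ
  | _, _ => none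

/-- The pairs `(σ, n)` such that `σ ++ [n]` is a non-root node. -/
def edges : Deriv → List (List ℕ × ℕ)
  | leaf _ _ => []
  | unary _ _ d => ([], 0) :: d.edges.map (Prod.map (List.cons 0) id)
  | binary _ _ d₁ d₂ => ([], 0) :: ([], 1) ::
      (d₁.edges.map (Prod.map (List.cons 0) id) ++ d₂.edges.map (Prod.map (List.cons 1) id))

def rules : Deriv → List Rule
  | leaf _ r => [r]
  | unary _ r d => r :: d.rules
  | binary _ r d₁ d₂ => r :: (d₁.rules ++ d₂.rules)

inductive Valid : Deriv → Prop
  | bud (S : Seq) : Valid (leaf S .bud)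
  | leaf {S : Seq} {r : Rule} : Inf r S [] → Valid (leaf S r)
  | unary {S : Seq} {r : Rule} {d : Deriv} : Inf r S [d.concl] → d.Valid → Valid (unary S r d)
  | binary {S : Seq} {r : Rule} {d₁ d₂ : Deriv} :
      Inf r S [d₁.concl, d₂.concl] → d₁.Valid → d₂.Valid → Valid (binary S r d₁ d₂)

@[simp] lemma label_nil_ne_none (d : Deriv) : d.label [] ≠ none := by
  cases d <;> simp [label]

lemma label_ne_none_of_append (d : Deriv) {σ τ : List ℕ} (h : d.label (σ ++ τ) ≠ none) :
    d.label σ ≠ none := by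
  induction d generalizing σ with
  | leaf => cases σ <;> simp_all [label]
  | unary S r d ih =>
    rcases σ with _ | ⟨_ | _, σ⟩ <;> simp_all [label]
  | binary S r d₁ d₂ ih₁ ih₂ =>
    rcases σ with _ | ⟨_ | _ | _, σ⟩ <;> simp_all [label]

lemma mem_edges_of_label_ne_none (d : Deriv) {σ : List ℕ} {n : ℕ}
    (h : d.label (σ ++ [n]) ≠ none) : (σ, n) ∈ d.edges := by
  induction d generalizing σ with
  | leaf => cases σ <;> simp_all [label]
  | unary S r d ih =>
    rcases σ with _ | ⟨_ | _, σ⟩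
    · rcases n with _ | n <;> simp_all [label, edges]
    all_goals simp_all [label, edges]
  | binary S r d₁ d₂ ih₁ ih₂ =>
    rcases σ with _ | ⟨_ | _ | _, σ⟩
    · rcases n with _ | _ | n <;> simp_all [label, edges]
    all_goals simp_all [label, edges]

lemma label_nil (d : Deriv) : d.label [] = some (d.concl, d.rule) := by
  cases d <;> rfl

lemma finite_label_ne_none (d : Deriv) : {σ | d.label σ ≠ none}.Finite := by
  refine (((d.edges.finite_toSet).image fun e => e.1 ++ [e.2]).insert []).subset ?_
  intro σ h
  rcases σ.eq_nil_or_concat' with rfl | ⟨σ, n, rfl⟩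
  · exact Set.mem_insert _ _
  · exact Set.mem_insert_of_mem _ ⟨(σ, n), d.mem_edges_of_label_ne_none h, rfl⟩

lemma mem_rules_of_label_eq (d : Deriv) {σ : List ℕ} {S : Seq} {r : Rule}
    (h : d.label σ = some (S, r)) : r ∈ d.rules := by
  induction d generalizing σ with
  | leaf => cases σ <;> simp_all [label, rules]
  | unary S r d ih =>
    rcases σ with _ | ⟨_ | _, σ⟩
    · simp_all [label, rules]
    · simp [rules, ih h]
    · simp [label] at h
  | binary S r d₁ d₂ ih₁ ih₂ =>
    rcases σ with _ | ⟨_ | _ | _, σ⟩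
    · simp_all [label, rules]
    · simp [rules, ih₁ h]
    · simp [rules, ih₂ h]
    · simp [label] at h

lemma Valid.wf {d : Deriv} (hd : d.Valid) : ∀ σ S r, d.label σ = some (S, r) →
    (r = Rule.bud ∧ ∀ i : ℕ, d.label (σ ++ [i]) = none) ∨
    (r ≠ Rule.bud ∧ ∃ prems, Inf r S prems ∧ childrenOK d.label σ prems) := by
  induction hd with
  | bud S =>
    rintro (_ | ⟨_, σ⟩) S' r h <;> simp_all [label]
  | leaf hinf =>
    rintro (_ | ⟨_, σ⟩) S' r' h <;> simp only [label, Option.some.injEq, Prod.mk.injEq,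
      reduceCtorEq] at h
    obtain ⟨rfl, rfl⟩ := h
    exact .inr ⟨hinf.ne_bud, [], hinf, nofun, fun _ _ => rfl⟩
  | unary hinf _ ih =>
    rintro (_ | ⟨_ | _, σ⟩) S' r' h
    · simp only [label, Option.some.injEq, Prod.mk.injEq] at h
      obtain ⟨rfl, rfl⟩ := h
      refine .inr ⟨hinf.ne_bud, _, hinf, fun i => ?_, fun i hi => ?_⟩
      · fin_cases i; exact ⟨_, label_nil _⟩
      · obtain ⟨i, rfl⟩ := Nat.exists_eq_add_of_le' hi; rfl
    · exact ih σ S' r' h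
    · simp [label] at h
  | binary hinf _ _ ih₁ ih₂ =>
    rintro (_ | ⟨_ | _ | _, σ⟩) S' r' h
    · simp only [label, Option.some.injEq, Prod.mk.injEq] at h
      obtain ⟨rfl, rfl⟩ := h
      refine .inr ⟨hinf.ne_bud, _, hinf, fun i => ?_, fun i hi => ?_⟩
      · fin_cases i <;> exact ⟨_, label_nil _⟩
      · obtain ⟨i, rfl⟩ := Nat.exists_eq_add_of_le' hi; rfl
    · exact ih₁ σ S' r' h
    · exact ih₂ σ S' r' h
    · simp [label] at h

def toDTree (d : Deriv) (hd : d.Valid) : DTree where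
  label := d.label
  root_def := d.label_nil_ne_none
  prefix_closed _ _ := d.label_ne_none_of_append
  wf := hd.wf

def toPreProof (d : Deriv) (hd : d.Valid) (C : List ℕ → List ℕ)
    (hC : ∀ σ S, d.label σ = some (S, .bud) → innerWith d.label (C σ) S) : PreProof where
  D := d.toDTree hd
  fin := d.finite_label_ne_none
  C := C
  comp := hC

end Deriv

lemma DTree.label_append_eq_none_of_budAt (D : DTree) {σ : List ℕ} (hσ : budAt D.label σ)
    {τ : List ℕ} (hτ : τ ≠ []) : D.label (σ ++ τ) = none := by
  obtain ⟨S, hS⟩ := hσ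
  obtain ⟨i, τ, rfl⟩ := List.exists_cons_of_ne_nil hτ
  by_contra h
  have hi := D.prefix_closed (σ ++ [i]) τ (by simpa using h)
  rcases D.wf σ S .bud hS with ⟨-, hleaf⟩ | ⟨hne, -⟩
  · exact hi (hleaf i)
  · exact hne rfl

lemma DTree.not_budAt_of_isPrefix (D : DTree) {σ π : List ℕ} (hσ : D.label σ ≠ none)
    (hπ : π <+: σ) (hne : π ≠ σ) : ¬ budAt D.label π := by
  obtain ⟨τ, rfl⟩ := hπ
  exact fun hb => hσ (D.label_append_eq_none_of_budAt hb (by simpa using hne))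

namespace PreProof

variable (P : PreProof)

/-- The target of the edge into `σ`: the companion if `σ` is a bud. -/
def jump (σ : List ℕ) : List ℕ :=
  match P.D.label σ with
  | some (_, .bud) => P.C σ
  | _ => σ

/-- The node of `P` that the node `σ` of the tree-unfolding is a copy of. -/
def resolve (σ : List ℕ) : List ℕ :=
  σ.foldl (fun ρ n => P.jump (ρ ++ [n])) []

def unfolding : Lbl := fun σ => P.D.label (P.resolve σ)

variable {P}

lemma jump_of_not_budAt {σ : List ℕ} (h : ¬ budAt P.D.label σ) : P.jump σ = σ := by
  unfold jump
  split
  · exact absurd ⟨_, ‹_›⟩ h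
  · rfl

lemma jump_of_budAt {σ : List ℕ} (h : budAt P.D.label σ) : P.jump σ = P.C σ := by
  obtain ⟨S, hS⟩ := h
  simp [jump, hS]

lemma label_ne_none_of_jump {σ : List ℕ} (h : P.D.label (P.jump σ) ≠ none) :
    P.D.label σ ≠ none := by
  unfold jump at h
  split at h
  · simp [*]
  · exact h

lemma resolve_append_singleton (σ : List ℕ) (n : ℕ) :
    P.resolve (σ ++ [n]) = P.jump (P.resolve σ ++ [n]) := by
  simp [resolve]

lemma resolve_eq_self {σ : List ℕ} (h : ∀ π, π <+: σ → ¬ budAt P.D.label π) :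
    P.resolve σ = σ := by
  induction σ using List.reverseRecOn with
  | nil => rfl
  | append_singleton σ n ih =>
    rw [resolve_append_singleton, ih fun π hπ => h π (hπ.trans (List.prefix_append σ [n])),
      jump_of_not_budAt (h _ List.prefix_rfl)]

lemma not_budAt_nil : ¬ budAt P.D.label [] := by
  intro hb
  obtain ⟨S, hS⟩ := hb
  obtain ⟨r, hC, hr⟩ := P.comp [] S hS
  by_cases hC0 : P.C [] = []
  · rw [hC0, hS] at hC
    cases hC
    exact hr rfl
  · have := P.D.label_append_eq_none_of_budAt ⟨S, hS⟩ hC0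
    simp_all

lemma resolve_of_ne_none {σ : List ℕ} (hσ : P.D.label σ ≠ none) (hb : ¬ budAt P.D.label σ) :
    P.resolve σ = σ :=
  resolve_eq_self fun π hπ => by
    by_cases he : π = σ
    · exact he ▸ hb
    · exact P.D.not_budAt_of_isPrefix hσ hπ he

lemma resolve_of_budAt {σ : List ℕ} (hb : budAt P.D.label σ) : P.resolve σ = P.C σ := by
  rcases σ.eq_nil_or_concat' with rfl | ⟨ρ, n, rfl⟩
  · exact absurd hb not_budAt_nil
  · have hσ : P.D.label (ρ ++ [n]) ≠ none := by obtain ⟨S, hS⟩ := hb; simp [hS]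
    rw [resolve_append_singleton, resolve_eq_self, jump_of_budAt hb]
    exact fun π hπ => P.D.not_budAt_of_isPrefix hσ (hπ.trans (List.prefix_append ρ [n]))
      fun h => by simpa [h] using hπ.length_le

lemma label_companion_ne_none_and_not_budAt {σ : List ℕ} {S : Seq}
    (hσ : P.D.label σ = some (S, .bud)) :
    P.D.label (P.C σ) ≠ none ∧ ¬ budAt P.D.label (P.C σ) := by
  obtain ⟨r, hC, hr⟩ := P.comp σ S hσ
  refine ⟨by simp [hC], fun ⟨S', hS'⟩ => hr ?_⟩
  rw [hC] at hS'
  cases hS'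
  rfl

theorem isUnfolding_unfolding : IsUnfolding P P.unfolding := by
  refine ⟨fun σ hσ hb => by rw [unfolding, resolve_of_ne_none hσ hb], fun σ₁ σ₂ hb => ?_,
    fun σ hσ hpre => by rw [unfolding, resolve_eq_self hpre, hσ]⟩
  obtain ⟨S, hS⟩ := hb
  obtain ⟨hC, hCb⟩ := label_companion_ne_none_and_not_budAt hS
  simp only [unfolding, resolve, List.foldl_append]
  rw [← resolve, ← resolve, resolve_of_budAt ⟨S, hS⟩, resolve_of_ne_none hC hCb]

end PreProof

lemma connStep_eqL_of_eq {v1 v2 : ℕ} {t u : Tm} {j : ℕ} {τ τ' : Fm} (h : τ' = τ)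
    (h₁ : τ.subst (sub2 v1 v2 t u) = τ) (h₂ : τ.subst (sub2 v1 v2 u t) = τ) :
    connStep (.eqL v1 v2 t u) j τ τ' :=
  ⟨τ, h₁.symm, h ▸ h₂.symm⟩

namespace PreProof

variable {P : PreProof}

/-- `level`, `rank` and `trace` rank the graph of `P` (tree edges, with an edge into a bud
redirected to its companion): no edge raises the level, and along an edge that keeps it the
trace is followed and either progresses or the rank drops. -/
def IsTraceRanking (P : PreProof) (level rank : List ℕ → ℕ) (trace : List ℕ → Fm) : Prop :=
  ∀ σ n S r, P.D.label σ = some (S, r) → P.D.label (P.jump (σ ++ [n])) ≠ none →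
    level (P.jump (σ ++ [n])) ≤ level σ ∧
    (level (P.jump (σ ++ [n])) = level σ →
      trace σ ∈ S.ant ∧ isIndAtom (trace σ) ∧
      connStep r n (trace σ) (trace (P.jump (σ ++ [n]))) ∧
      (progStep r n (trace σ) (trace (P.jump (σ ++ [n]))) ∨ rank (P.jump (σ ++ [n])) < rank σ))

theorem gtc_unfolding_of_isTraceRanking {level rank : List ℕ → ℕ} {trace : List ℕ → Fm}
    (hR : P.IsTraceRanking level rank trace) : GTC P.unfolding := by
  rintro p ⟨hdef, hstep⟩
  choose n hn using hstep
  set q : ℕ → List ℕ := fun i => P.resolve (p i)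
  have hq : ∀ i, q (i + 1) = P.jump (q i ++ [n i]) := fun i => by
    simp only [q, hn, resolve_append_singleton]
  have hedge : ∀ i, ∃ S r, P.unfolding (p i) = some (S, r) ∧ _ := fun i => by
    obtain ⟨⟨S, r⟩, hSr⟩ := Option.ne_none_iff_exists'.mp (hdef i)
    have h := hR (q i) (n i) S r hSr (hq i ▸ hdef (i + 1))
    rw [← hq i] at h
    exact ⟨S, r, hSr, h⟩
  choose S r hSr hlevel using hedge
  obtain ⟨k, hk⟩ := WellFoundedLT.antitone_chain_condition (f := fun i => level (q i))
    (antitone_nat_of_succ_le fun i => (hlevel i).1)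
  have hstable : ∀ i, k ≤ i → level (q (i + 1)) = level (q i) := fun i hi =>
    ((hk i hi).symm.trans (hk (i + 1) (by omega))).symm
  have htrace : ∀ i, k ≤ i → _ := fun i hi => (hlevel i).2 (hstable i hi)
  refine ⟨k, fun i => trace (q i), fun i hi => ?_, fun m => ?_⟩
  · obtain ⟨hmem, hatom, hconn, -⟩ := htrace i hi
    exact ⟨S i, r i, n i, hSr i, hmem, hatom, hn i, hconn⟩
  · by_contra! hfin
    refine not_strictAnti_of_wellFoundedLT (fun j => rank (q (max m k + j)))
      (strictAnti_nat_of_succ_lt fun j => ?_)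
    have hi : k ≤ max m k + j := by omega
    rcases (htrace _ hi).2.2.2 with hprog | hlt
    · exact absurd ⟨S _, r _, n _, hSr _, hn _, hprog⟩ (hfin _ (by omega) hi)
    · exact hlt

theorem isProof_of_isTraceRanking {level rank : List ℕ → ℕ} {trace : List ℕ → Fm}
    (hR : P.IsTraceRanking level rank trace) : P.IsProof :=
  ⟨P.unfolding, isUnfolding_unfolding, gtc_unfolding_of_isTraceRanking hR⟩

end PreProof

namespace Add2Add1

open Deriv

abbrev x0 : Tm := .var 0
abbrev x1 : Tm := .var 1
abbrev x2 : Tm := .var 2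
abbrev x3 : Tm := .var 3
abbrev x4 : Tm := .var 4
abbrev x5 : Tm := .var 5
abbrev x6 : Tm := .var 6
abbrev x7 : Tm := .var 7

def lemmaSeq : Seq := ⟨{.add1 x3 (.s x4) x5}, {.add1 (.s x3) x4 x5}⟩

def lemmaDeriv : Deriv :=
  binary lemmaSeq (.caseAdd1 x3 (.s x4) x5 0 1 2)
    (unary ⟨{.eq x3 .zero, .eq (.s x4) x1, .eq x5 x1}, {.add1 (.s x3) x4 x5}⟩ (.eqL 6 7 x3 .zero)
      (unary ⟨{.eq (.s x4) x1, .eq x5 x1}, {.add1 (.s .zero) x4 x5}⟩ (.eqL 6 7 x5 x1)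
        (unary ⟨{.eq (.s x4) x1}, {.add1 (.s .zero) x4 x1}⟩ (.eqL 6 7 (.s x4) x1)
          (unary ⟨∅, {.add1 (.s .zero) x4 (.s x4)}⟩ (.add1R2 .zero x4 x4)
            (leaf ⟨∅, {.add1 .zero x4 x4}⟩ .add1R1)))))
    (unary ⟨{.eq x3 (.s x0), .eq (.s x4) x1, .eq x5 (.s x2), .add1 x0 x1 x2},
        {.add1 (.s x3) x4 x5}⟩ (.eqL 6 7 x3 (.s x0))
      (unary ⟨{.eq (.s x4) x1, .eq x5 (.s x2), .add1 x0 x1 x2}, {.add1 (.s (.s x0)) x4 x5}⟩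
          (.eqL 6 7 x5 (.s x2))
        (unary ⟨{.eq (.s x4) x1, .add1 x0 x1 x2}, {.add1 (.s (.s x0)) x4 (.s x2)}⟩
            (.eqL 6 7 (.s x4) x1)
          (unary ⟨{.add1 x0 (.s x4) x2}, {.add1 (.s (.s x0)) x4 (.s x2)}⟩ (.add1R2 (.s x0) x4 x2)
            (unary ⟨{.add1 x0 (.s x4) x2}, {.add1 (.s x0) x4 x2}⟩
                (.subst fun n => if n = 3 then x0 else if n = 5 then x2 else .var n)
              (leaf lemmaSeq .bud))))))

def goalDeriv : Deriv :=
  binary goalSeq (.caseAdd2 x0 x1 x2 3 4 5)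
    (unary ⟨{.eq x0 .zero, .eq x1 x4, .eq x2 x4}, {.add1 x0 x1 x2}⟩ (.eqL 6 7 x0 .zero)
      (unary ⟨{.eq x1 x4, .eq x2 x4}, {.add1 .zero x1 x2}⟩ (.eqL 6 7 x1 x4)
        (unary ⟨{.eq x2 x4}, {.add1 .zero x4 x2}⟩ (.eqL 6 7 x2 x4)
          (leaf ⟨∅, {.add1 .zero x4 x4}⟩ .add1R1))))
    (unary ⟨{.eq x0 (.s x3), .eq x1 x4, .eq x2 x5, .add2 x3 (.s x4) x5}, {.add1 x0 x1 x2}⟩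
        (.eqL 6 7 x0 (.s x3))
      (unary ⟨{.eq x1 x4, .eq x2 x5, .add2 x3 (.s x4) x5}, {.add1 (.s x3) x1 x2}⟩ (.eqL 6 7 x1 x4)
        (unary ⟨{.eq x2 x5, .add2 x3 (.s x4) x5}, {.add1 (.s x3) x4 x2}⟩ (.eqL 6 7 x2 x5)
          (binary ⟨{.add2 x3 (.s x4) x5}, {.add1 (.s x3) x4 x5}⟩ (.cut (.add1 x3 (.s x4) x5))
            (unary ⟨{.add2 x3 (.s x4) x5}, {.add1 x3 (.s x4) x5, .add1 (.s x3) x4 x5}⟩ .weak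
              (unary ⟨{.add2 x3 (.s x4) x5}, {.add1 x3 (.s x4) x5}⟩
                  (.subst fun n => if n = 0 then x3 else if n = 1 then .s x4 else
                    if n = 2 then x5 else .var n)
                (leaf goalSeq .bud)))
            (unary ⟨{.add1 x3 (.s x4) x5, .add2 x3 (.s x4) x5}, {.add1 (.s x3) x4 x5}⟩ .weak
              lemmaDeriv)))))

/- Each (=L) step is given by templates `Γ`, `Δ` of `Inf.eqL`, in which `x6` and `x7` mark the
occurrences rewritten by the equation. -/
lemma lemmaDeriv_valid : lemmaDeriv.Valid := by
  refine .binary ?_ (.unary ?_ (.unary ?_ (.unary ?_ (.unary ?_ (.leaf ?_)))))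
    (.unary ?_ (.unary ?_ (.unary ?_ (.unary ?_ (.unary ?_ (.bud _))))))
  · refine (Inf.caseAdd1 (Γ := ∅) (Δ := {.add1 (.s x3) x4 x5}) (by decide) (by decide) (by decide)
      ?_).of_eq (by decide) (by decide)
    intro ψ hψ
    fin_cases hψ <;> simp [Fm.fv, Tm.fv]
  · exact (Inf.eqL (Γ := {.eq (.s x4) x1, .eq x5 x1}) (Δ := {.add1 (.s x6) x4 x5})).of_eq
      (by decide) (by decide)
  · exact (Inf.eqL (Γ := {.eq (.s x4) x1}) (Δ := {.add1 (.s .zero) x4 x6})).of_eq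
      (by decide) (by decide)
  · exact (Inf.eqL (Γ := ∅) (Δ := {.add1 (.s .zero) x4 x7})).of_eq (by decide) (by decide)
  · exact (Inf.add1R2 (Γ := ∅) (Δ := ∅)).of_eq (by decide) (by decide)
  · exact (Inf.add1R1 (Γ := ∅) (Δ := ∅) (b := x4)).of_eq (by decide) (by decide)
  · exact (Inf.eqL (Γ := {.eq (.s x4) x1, .eq x5 (.s x2), .add1 x0 x1 x2})
      (Δ := {.add1 (.s x6) x4 x5})).of_eq (by decide) (by decide)
  · exact (Inf.eqL (Γ := {.eq (.s x4) x1, .add1 x0 x1 x2})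
      (Δ := {.add1 (.s (.s x0)) x4 x6})).of_eq (by decide) (by decide)
  · exact (Inf.eqL (Γ := {.add1 x0 x7 x2}) (Δ := {.add1 (.s (.s x0)) x4 (.s x2)})).of_eq
      (by decide) (by decide)
  · exact (Inf.add1R2 (Γ := {.add1 x0 (.s x4) x2}) (Δ := ∅)).of_eq (by decide) (by decide)
  · exact (Inf.subst (Γ := lemmaSeq.ant) (Δ := lemmaSeq.suc)).of_eq (by decide) (by decide)

lemma goalDeriv_valid : goalDeriv.Valid := by
  refine .binary ?_ (.unary ?_ (.unary ?_ (.unary ?_ (.leaf ?_))))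
    (.unary ?_ (.unary ?_ (.unary ?_ (.binary ?_ (.unary ?_ (.unary ?_ (.bud _)))
      (.unary ?_ lemmaDeriv_valid)))))
  · refine (Inf.caseAdd2 (Γ := ∅) (Δ := {.add1 x0 x1 x2}) (by decide) (by decide) (by decide)
      ?_).of_eq (by decide) (by decide)
    intro ψ hψ
    fin_cases hψ <;> simp [Fm.fv, Tm.fv]
  · exact (Inf.eqL (Γ := {.eq x1 x4, .eq x2 x4}) (Δ := {.add1 x6 x1 x2})).of_eq
      (by decide) (by decide)
  · exact (Inf.eqL (Γ := {.eq x2 x4}) (Δ := {.add1 .zero x6 x2})).of_eq (by decide) (by decide)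
  · exact (Inf.eqL (Γ := ∅) (Δ := {.add1 .zero x4 x6})).of_eq (by decide) (by decide)
  · exact (Inf.add1R1 (Γ := ∅) (Δ := ∅) (b := x4)).of_eq (by decide) (by decide)
  · exact (Inf.eqL (Γ := {.eq x1 x4, .eq x2 x5, .add2 x3 (.s x4) x5})
      (Δ := {.add1 x6 x1 x2})).of_eq (by decide) (by decide)
  · exact (Inf.eqL (Γ := {.eq x2 x5, .add2 x3 (.s x4) x5}) (Δ := {.add1 (.s x3) x6 x2})).of_eq
      (by decide) (by decide)
  · exact (Inf.eqL (Γ := {.add2 x3 (.s x4) x5}) (Δ := {.add1 (.s x3) x4 x6})).of_eq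
      (by decide) (by decide)
  · exact Inf.cut
  · refine .weak ?_ ?_ <;> decide
  · exact (Inf.subst (Γ := goalSeq.ant) (Δ := goalSeq.suc)).of_eq (by decide) (by decide)
  · refine .weak ?_ ?_ <;> decide

def lemmaRoot : List ℕ := [1, 0, 0, 0, 1, 0]

def companion (σ : List ℕ) : List ℕ := if σ = [1, 0, 0, 0, 0, 0, 0] then [] else lemmaRoot

lemma innerWith_companion (σ : List ℕ) (S : Seq) (h : goalDeriv.label σ = some (S, .bud)) :
    innerWith goalDeriv.label (companion σ) S := by
  rcases σ.eq_nil_or_concat' with rfl | ⟨σ, n, rfl⟩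
  · cases h
  have he := goalDeriv.mem_edges_of_label_ne_none (σ := σ) (n := n) (by simp [h])
  fin_cases he
  all_goals cases h
  all_goals exact ⟨_, rfl, nofun⟩

def preProof : PreProof := goalDeriv.toPreProof goalDeriv_valid companion innerWith_companion

def mainLoop : List (List ℕ) :=
  [[], [1], [1, 0], [1, 0, 0], [1, 0, 0, 0], [1, 0, 0, 0, 0], [1, 0, 0, 0, 0, 0]]

def lemmaLoop : List (List ℕ) :=
  [lemmaRoot, [1, 0, 0, 0, 1, 0, 1], [1, 0, 0, 0, 1, 0, 1, 0], [1, 0, 0, 0, 1, 0, 1, 0, 0],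
    [1, 0, 0, 0, 1, 0, 1, 0, 0, 0], [1, 0, 0, 0, 1, 0, 1, 0, 0, 0, 0]]

/- Each loop has a constant level, and the nodes off the loops lie on finite branches, along
which the level drops with depth. Along a loop the rank counts down towards its companion, from
which the trace progresses. On the loops, `trace σ` is the only inductive atom of the antecedent
at `σ`. -/
def level (σ : List ℕ) : ℕ :=
  if σ ∈ mainLoop then 100 else if σ ∈ lemmaLoop then 50
  else if lemmaRoot <+: σ then 50 - σ.length else 100 - σ.length

def rank (σ : List ℕ) : ℕ := if σ = [] ∨ σ = lemmaRoot then 0 else 100 - σ.length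

def trace (σ : List ℕ) : Fm :=
  if σ = [] then .add2 x0 x1 x2
  else if σ ∈ mainLoop then .add2 x3 (.s x4) x5
  else if σ = lemmaRoot then .add1 x3 (.s x4) x5
  else if σ.length ≤ 9 then .add1 x0 x1 x2 else .add1 x0 (.s x4) x2

lemma isIndAtom_trace (σ : List ℕ) : isIndAtom (trace σ) := by
  unfold trace; split_ifs <;> simp [isIndAtom]

lemma preProof_isTraceRanking : preProof.IsTraceRanking level rank trace := by
  intro σ n S r hSr hne
  have he := goalDeriv.mem_edges_of_label_ne_none (PreProof.label_ne_none_of_jump hne)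
  fin_cases he <;> cases hSr
  all_goals refine ⟨by decide, fun hl => ?_⟩
  all_goals first
    | exact absurd hl (by decide)
    | refine ⟨by decide, isIndAtom_trace _, ?_, ?_⟩
  all_goals first
    | (unfold connStep; decide)
    | exact .inr (by unfold progStep; decide)
    | exact connStep_eqL_of_eq (by decide) (by decide) (by decide)
    -- the one (=L) step that rewrites the trace: `Add1(x0, x1, x2)` becomes `Add1(x0, s x4, x2)`
    | exact ⟨.add1 x0 x7 x2, by decide, by decide⟩
    | exact .inr (by decide)
    | exact .inl (by unfold progStep; decide)

lemma preProof_noEqLa : preProof.NoEqLa := by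
  rintro ⟨σ, S, r, h, v1, v2, t, u, rfl⟩
  simpa [goalDeriv, lemmaDeriv, rules] using goalDeriv.mem_rules_of_label_eq h

end Add2Add1

/-- `Add2(x,y,z) ⊢ Add1(x,y,z)` is provable in `CLKID^ω`. -/
theorem add2_add1_provable_in_CLKIDomega : ProvableW goalSeq :=
  ⟨Add2Add1.preProof, PreProof.isProof_of_isTraceRanking Add2Add1.preProof_isTraceRanking,
    Add2Add1.preProof_noEqLa, ⟨_, rfl⟩⟩

end CLKID
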